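/- arXiv:2510.14186 — 2 statements merged into one kernel-verified Lean document; each statement's English description precedes it below -/
import Mathlib

section
/- Quorum intersection for precedence evidence: if n > 2f(γ+1)/(2γ-1) with 1/2 < γ ≤ 1, and at least ⌈γn⌉ replicas (out of n, with at most f Byzantine) report tx1 before tx2, then strictly more honest replicas report tx1 before tx2 than could report tx2 before tx1, i.e., ⌈γn⌉ - f > n - ⌈γn⌉. -/
/-- Quorum intersection for precedence evidence: if `n > 2f(γ+1)/(2γ-1)` with
`1/2 < γ ≤ 1`, and at least `⌈γn⌉` of the `n` replicas (at most `f` Byzantine)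
report `tx1` before `tx2`, then `⌈γn⌉ - f > n - ⌈γn⌉`, i.e. strictly more honest
replicas report `tx1` before `tx2` than could report the reverse. -/
theorem quorum_intersection (n f : ℕ) (γ : ℝ)
    (hγlo : 1/2 < γ) (hγhi : γ ≤ 1)
    (hbound : (n : ℝ) > 2 * f * (γ + 1) / (2 * γ - 1)) :
    (⌈γ * (n : ℝ)⌉ : ℤ) - f > (n : ℤ) - ⌈γ * (n : ℝ)⌉ := by
  have h1 : (0:ℝ) < 2 * γ - 1 := by linarith
  have h2 : 2 * (f:ℝ) * (γ + 1) < n * (2 * γ - 1) := by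
    rw [gt_iff_lt, div_lt_iff₀ h1] at hbound
    exact hbound
  have hc : γ * n ≤ (⌈γ * (n : ℝ)⌉ : ℝ) := Int.le_ceil _
  have hf : (0:ℝ) ≤ f := Nat.cast_nonneg f
  have key : ((n:ℤ) : ℝ) - ⌈γ * (n : ℝ)⌉ < (⌈γ * (n : ℝ)⌉ : ℝ) - f := by
    push_cast
    nlinarith
  exact_mod_cast key
end

section
/- The non-blank threshold exceeds the Byzantine count: if n > 2f(γ+1)/(2γ-1) with 1/2 < γ ≤ 1, then T_nonblank = ⌊n(1-γ) + γf + 1⌋ satisfies T_nonblank > f, so any non-blank transaction has at least one honest supporter. -/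
/-- The non-blank threshold exceeds the Byzantine count: if `n > 2f(γ+1)/(2γ-1)` with
`1/2 < γ ≤ 1`, then `T_nonblank = ⌊n(1-γ) + γf⌋ + 1` satisfies `T_nonblank ≥ f + 1`,
so any non-blank transaction has at least one honest supporter. -/
theorem nonblank_threshold_exceeds_byzantine (n f : ℕ) (γ : ℝ)
    (hγlo : 1/2 < γ) (hγhi : γ ≤ 1)
    (hbound : (n : ℝ) > 2 * f * (γ + 1) / (2 * γ - 1)) :
    (⌊(n : ℝ) * (1 - γ) + γ * f⌋ : ℤ) + 1 ≥ (f : ℤ) + 1 := by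
  have hpos : (0:ℝ) < 2 * γ - 1 := by linarith
  have hf : (0:ℝ) ≤ f := Nat.cast_nonneg f
  have hnf : (f:ℝ) ≤ n := by
    rw [gt_iff_lt, div_lt_iff₀ hpos] at hbound
    nlinarith
  have : (f:ℝ) ≤ (n : ℝ) * (1 - γ) + γ * f := by nlinarith
  have h := Int.le_floor.mpr (by exact_mod_cast this : ((f:ℤ):ℝ) ≤ (n : ℝ) * (1 - γ) + γ * f)
  linarith
end
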